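/- arXiv:1903.08720 — 6 statements merged into one kernel-verified Lean document; each statement's English description precedes it below -/
import Mathlib

section
/- Let A be a real m×n matrix, s ∈ ℝⁿ, y, σ ∈ ℝᵐ, γ ∈ ℝⁿ. Set ρ = y − A s and τ = γ − Aᵀσ, and assume σᵀρ ≠ 0. Define the adjoint TR1 update A⁺ = A + (1/(σᵀρ)) ρ τᵀ. Then the one-step forward-secant residual satisfies the exact identity y − A⁺ s = (1 − τᵀs/(σᵀρ)) ρ, and consequently ‖y − A⁺ s‖ = (|σᵀy − γᵀs| / |σᵀρ|) · ‖ρ‖. -/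
open scoped RealInnerProductSpace Matrix

/-! Because the update's left factor is the residual `ρ` itself, `A⁺ s = A s + α (τᵀs) ρ`, so the
new residual is `(1 - α τᵀs) ρ` for every scaling `α`. With `α = 1/(σᵀρ)` the factor is
`(σᵀρ - τᵀs)/(σᵀρ)`, and `σᵀρ - τᵀs = σᵀy - γᵀs` since `σᵀ(A s) = (Aᵀσ)ᵀ s`. -/

/-- Multiplication of a matrix with a vector, as a map between Euclidean spaces. -/
noncomputable def matVec {m n : ℕ} (A : Matrix (Fin m) (Fin n) ℝ)
    (v : EuclideanSpace ℝ (Fin n)) : EuclideanSpace ℝ (Fin m) :=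
  Matrix.toEuclideanLin A v

/-- Outer product `u vᵀ` of two Euclidean vectors, as a matrix. -/
def outer {m n : ℕ} (u : EuclideanSpace ℝ (Fin m)) (v : EuclideanSpace ℝ (Fin n)) :
    Matrix (Fin m) (Fin n) ℝ :=
  Matrix.of fun i j => u i * v j

section MatVec

variable {m n : ℕ}

lemma matVec_add (A B : Matrix (Fin m) (Fin n) ℝ) (v : EuclideanSpace ℝ (Fin n)) :
    matVec (A + B) v = matVec A v + matVec B v := by
  simp [matVec]

lemma matVec_smul (c : ℝ) (A : Matrix (Fin m) (Fin n) ℝ) (v : EuclideanSpace ℝ (Fin n)) :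
    matVec (c • A) v = c • matVec A v := by
  simp [matVec]

lemma matVec_outer (u : EuclideanSpace ℝ (Fin m)) (v s : EuclideanSpace ℝ (Fin n)) :
    matVec (outer u v) s = ⟪v, s⟫ • u := by
  ext i
  simp only [matVec, outer, Matrix.toLpLin_apply, PiLp.toLp_apply, Matrix.mulVec, dotProduct,
    Matrix.of_apply, PiLp.smul_apply, smul_eq_mul, PiLp.inner_apply, RCLike.inner_apply,
    conj_trivial, Finset.sum_mul]
  exact Finset.sum_congr rfl fun j _ => by ring

lemma inner_matVec_eq_inner_matVec_transpose (A : Matrix (Fin m) (Fin n) ℝ)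
    (σ : EuclideanSpace ℝ (Fin m)) (s : EuclideanSpace ℝ (Fin n)) :
    ⟪σ, matVec A s⟫ = ⟪matVec Aᵀ σ, s⟫ := by
  rw [matVec, matVec, ← Matrix.conjTranspose_eq_transpose_of_trivial,
    Matrix.toEuclideanLin_conjTranspose_eq_adjoint, LinearMap.adjoint_inner_left]

end MatVec

section TR1

variable {m n : ℕ} (A : Matrix (Fin m) (Fin n) ℝ) (s : EuclideanSpace ℝ (Fin n))
  (y σ : EuclideanSpace ℝ (Fin m)) (γ : EuclideanSpace ℝ (Fin n))

lemma forward_residual_rankOne_update (τ : EuclideanSpace ℝ (Fin n)) (α : ℝ) :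
    y - matVec (A + α • outer (y - matVec A s) τ) s = (1 - α * ⟪τ, s⟫) • (y - matVec A s) := by
  rw [matVec_add, matVec_smul, matVec_outer, smul_smul, sub_smul, one_smul, sub_add_eq_sub_sub,
    mul_comm]

lemma inner_residual_sub_inner_adjoint_residual :
    ⟪σ, y - matVec A s⟫ - ⟪γ - matVec Aᵀ σ, s⟫ = ⟪σ, y⟫ - ⟪γ, s⟫ := by
  rw [inner_sub_right, inner_sub_left, inner_matVec_eq_inner_matVec_transpose]
  ring

end TR1

/-- exact identity for the one-step forward-secant residual of the
adjoint TR1 update, and the resulting norm identity. -/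
theorem tr1_adjoint_forward_residual {m n : ℕ}
    (A : Matrix (Fin m) (Fin n) ℝ)
    (s : EuclideanSpace ℝ (Fin n)) (y σ : EuclideanSpace ℝ (Fin m))
    (γ : EuclideanSpace ℝ (Fin n))
    (ρ : EuclideanSpace ℝ (Fin m)) (hρ : ρ = y - matVec A s)
    (τ : EuclideanSpace ℝ (Fin n)) (hτ : τ = γ - matVec Aᵀ σ)
    (hne : ⟪σ, ρ⟫ ≠ 0)
    (Aplus : Matrix (Fin m) (Fin n) ℝ)
    (hA : Aplus = A + (1 / ⟪σ, ρ⟫) • outer ρ τ) :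
    y - matVec Aplus s = (1 - ⟪τ, s⟫ / ⟪σ, ρ⟫) • ρ ∧
      ‖y - matVec Aplus s‖ = (|⟪σ, y⟫ - ⟪γ, s⟫| / |⟪σ, ρ⟫|) * ‖ρ‖ := by
  have hres : y - matVec Aplus s = (1 - ⟪τ, s⟫ / ⟪σ, ρ⟫) • ρ := by
    rw [hA, hρ, forward_residual_rankOne_update, one_div_mul_eq_div]
  have hfactor : 1 - ⟪τ, s⟫ / ⟪σ, ρ⟫ = (⟪σ, y⟫ - ⟪γ, s⟫) / ⟪σ, ρ⟫ := by
    rw [← inner_residual_sub_inner_adjoint_residual A s y σ γ, ← hρ, ← hτ, sub_div, div_self hne]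
  refine ⟨hres, ?_⟩
  rw [hres, norm_smul, hfactor, Real.norm_eq_abs, abs_div]
end

section
/- (Theorem 3, convergence of block-wise TR1 Jacobian approximations on the null space.) Let F : ℝⁿ → ℝᵐ be continuously differentiable with Jacobian DF Lipschitz continuous with constant c₃, and let c₁ ∈ (0,1). Let (wᵏ)ₖ in ℝⁿ, (σᵏ)ₖ in ℝᵐ, (Aᵏ)ₖ in ℝ^{m×n} satisfy the dynamic TR1 update setup: sᵏ = wᵏ⁺¹ − wᵏ, yᵏ = F(wᵏ⁺¹) − F(wᵏ), γᵏ = DF(wᵏ⁺¹)ᵀσᵏ, ρᵏ = yᵏ − Aᵏsᵏ, τᵏ = γᵏ − (Aᵏ)ᵀσᵏ, and at every iteration k: σᵏ ≠ 0, both skipping conditions |(τᵏ)ᵀsᵏ| ≥ c₁‖σᵏ‖‖ρᵏ‖ and |(σᵏ)ᵀρᵏ| ≥ c₁‖sᵏ‖‖τᵏ‖ hold, and Aᵏ⁺¹ = Aᵏ + αᵏ ρᵏ (τᵏ)ᵀ with αᵏ equal to either the forward scaling 1/((τᵏ)ᵀsᵏ) or the adjoint scaling 1/((σᵏ)ᵀρᵏ)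 (denominator nonzero). Assume wᵏ → w* as k → ∞. Let N ∈ ℝ^{n×q} have orthonormal columns, and assume uniform linear independence of the steps in the range of N: there exist c₄ > 0, an integer l ≥ q, and k₀ such that for each k ≥ k₀ there exist q distinct indices k ≤ k¹ < … < k^q ≤ k + l and nonzero vectors v¹, …, v^q ∈ ℝ^q with s^{kʲ} = N vʲ for each j, such that the matrix with columns vʲ/‖vʲ‖, j = 1,…,q, has minimum singular value at least c₄. Then lim_{k→∞} ‖(Aᵏ − DF(w*)) N‖ = 0. -/
open scoped RealInnerProductSpace Matrix Matrix.Norms.L2Operator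
open Filter

/-!
Write `Eₖ = Aₖ - DF(w*)` and `δₖ = c₃ max (‖wₖ - w*‖, ‖wₖ₊₁ - w*‖)`, which tends to zero. The
skipping conditions bound the scaling by `|αₖ| ‖σₖ‖ ‖ρₖ‖ ≤ c₁⁻²`. Hence one TR1 update enlarges the
error `‖Eₖ u‖` in a fixed direction `u` at most by the factor `1 + c₁⁻²` plus `c₁⁻² δₖ ‖u‖`, and
leaves an error `O(δₖ ‖sₖ‖)` in its own step direction `sₖ`, because `τₖᵀsₖ - σₖᵀρₖ` does not depend
on `Aₖ` and is `O(δₖ ‖σₖ‖ ‖sₖ‖)`. By the discrete Grönwall inequality the errors in the `q` steps of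
a window of length `l` stay `O(δ)` up to the end of the window, and these steps span the range of
`N` with coefficients bounded through `c₄`, so `‖Eₖ N‖` is bounded by a multiple of the sum of the
`δᵢ` over the preceding window.
-/

section MatVec

variable {m n p : ℕ}

lemma matVec_sub_left (A B : Matrix (Fin m) (Fin n) ℝ) (x : EuclideanSpace ℝ (Fin n)) :
    matVec (A - B) x = matVec A x - matVec B x := by
  simp [matVec]

lemma matVec_add_left (A B : Matrix (Fin m) (Fin n) ℝ) (x : EuclideanSpace ℝ (Fin n)) :
    matVec (A + B) x = matVec A x + matVec B x := by
  simp [matVec]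

lemma matVec_mul (A : Matrix (Fin m) (Fin n) ℝ) (B : Matrix (Fin n) (Fin p) ℝ)
    (x : EuclideanSpace ℝ (Fin p)) : matVec (A * B) x = matVec A (matVec B x) := by
  simp [matVec]

lemma matVec_smul_outer (c : ℝ) (u : EuclideanSpace ℝ (Fin m)) (v x : EuclideanSpace ℝ (Fin n)) :
    matVec (c • outer u v) x = (c * ⟪v, x⟫) • u := by
  ext i
  simp only [matVec, outer, Matrix.smul_of, Matrix.ofLp_toLpLin, Matrix.toLin'_apply, Matrix.mulVec,
    dotProduct, Matrix.of_apply, Pi.smul_apply, smul_eq_mul, PiLp.inner_apply, RCLike.inner_apply,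
    Real.ringHom_apply, Finset.mul_sum, PiLp.smul_apply, Finset.sum_mul]
  exact Finset.sum_congr rfl fun j _ => by ring

lemma inner_matVec_transpose (A : Matrix (Fin m) (Fin n) ℝ) (u : EuclideanSpace ℝ (Fin m))
    (x : EuclideanSpace ℝ (Fin n)) : ⟪matVec Aᵀ u, x⟫ = ⟪u, matVec A x⟫ := by
  rw [matVec, ← Matrix.conjTranspose_eq_transpose_of_trivial,
    Matrix.toEuclideanLin_conjTranspose_eq_adjoint, LinearMap.adjoint_inner_left, matVec]

lemma norm_matVec_le (A : Matrix (Fin m) (Fin n) ℝ) (x : EuclideanSpace ℝ (Fin n)) :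
    ‖matVec A x‖ ≤ ‖A‖ * ‖x‖ :=
  ((Matrix.toEuclideanLin.trans LinearMap.toContinuousLinearMap) A).le_opNorm x

lemma norm_le_of_norm_matVec_le {A : Matrix (Fin m) (Fin n) ℝ} {C : ℝ} (hC : 0 ≤ C)
    (h : ∀ x, ‖matVec A x‖ ≤ C * ‖x‖) : ‖A‖ ≤ C :=
  ContinuousLinearMap.opNorm_le_bound _ hC h

lemma norm_matVec_transpose_le (A : Matrix (Fin m) (Fin n) ℝ) (x : EuclideanSpace ℝ (Fin m)) :
    ‖matVec Aᵀ x‖ ≤ ‖A‖ * ‖x‖ := by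
  rw [← Matrix.l2_opNorm_conjTranspose A, Matrix.conjTranspose_eq_transpose_of_trivial]
  exact norm_matVec_le _ _

lemma norm_matVec_of_transpose_mul_self {N : Matrix (Fin n) (Fin p) ℝ} (hN : Nᵀ * N = 1)
    (x : EuclideanSpace ℝ (Fin p)) : ‖matVec N x‖ = ‖x‖ := by
  have h : ⟪matVec N x, matVec N x⟫ = ⟪x, x⟫ := by
    rw [← inner_matVec_transpose, ← matVec_mul, hN]
    simp [matVec]
  rw [real_inner_self_eq_norm_sq, real_inner_self_eq_norm_sq] at h
  exact (sq_eq_sq₀ (norm_nonneg _) (norm_nonneg _)).1 h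

lemma inner_sub_matVec_transpose (A B : Matrix (Fin m) (Fin n) ℝ) (γ u : EuclideanSpace ℝ (Fin n))
    (σ : EuclideanSpace ℝ (Fin m)) :
    ⟪γ - matVec Aᵀ σ, u⟫ = ⟪γ - matVec Bᵀ σ, u⟫ - ⟪σ, matVec (A - B) u⟫ := by
  rw [matVec_sub_left, inner_sub_left, inner_sub_left, inner_sub_right, inner_matVec_transpose,
    inner_matVec_transpose]
  ring

lemma inner_sub_matVec_transpose_sub_inner (A : Matrix (Fin m) (Fin n) ℝ)
    (γ s : EuclideanSpace ℝ (Fin n)) (y σ : EuclideanSpace ℝ (Fin m)) :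
    ⟪γ - matVec Aᵀ σ, s⟫ - ⟪σ, y - matVec A s⟫ = ⟪γ, s⟫ - ⟪σ, y⟫ := by
  rw [inner_sub_left, inner_sub_right, inner_matVec_transpose]
  ring

end MatVec

theorem norm_sub_sub_fderiv_le {E F : Type*} [NormedAddCommGroup E] [NormedSpace ℝ E]
    [NormedAddCommGroup F] [NormedSpace ℝ F] {f : E → F} {f' : E → E →L[ℝ] F} {z : E} {L : ℝ}
    (hf : ∀ x, HasFDerivAt f (f' x) x) (hf' : ∀ x, ‖f' x - f' z‖ ≤ L * ‖x - z‖) (hL : 0 ≤ L)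
    (a b : E) : ‖f b - f a - f' z (b - a)‖ ≤ L * max ‖a - z‖ ‖b - z‖ * ‖b - a‖ := by
  set r := max ‖a - z‖ ‖b - z‖
  have hball : ∀ x, ‖x - z‖ ≤ r → x ∈ Metric.closedBall z r := fun x hx => by
    rwa [Metric.mem_closedBall, dist_eq_norm]
  refine Convex.norm_image_sub_le_of_norm_hasFDerivWithin_le' (fun x _ => (hf x).hasFDerivWithinAt)
    (fun x hx => (hf' x).trans ?_) (convex_closedBall z r)
    (hball a (le_max_left _ _)) (hball b (le_max_right _ _))
  rw [Metric.mem_closedBall, dist_eq_norm] at hx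
  gcongr

theorem abs_mul_norm_mul_norm_le_of_skip {X Y : Type*} [NormedAddCommGroup X]
    [InnerProductSpace ℝ X] [NormedAddCommGroup Y] [InnerProductSpace ℝ Y]
    {s τ : X} {σ ρ : Y} {c₁ α : ℝ} (hc₁0 : 0 < c₁) (hc₁1 : c₁ ≤ 1)
    (hskip1 : c₁ * ‖σ‖ * ‖ρ‖ ≤ |⟪τ, s⟫|) (hskip2 : c₁ * ‖s‖ * ‖τ‖ ≤ |⟪σ, ρ⟫|)
    (hα : α * ⟪τ, s⟫ = 1 ∨ α * ⟪σ, ρ⟫ = 1) : |α| * (‖σ‖ * ‖ρ‖) ≤ (c₁ ^ 2)⁻¹ := by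
  have hforward : c₁ ^ 2 * (‖σ‖ * ‖ρ‖) ≤ c₁ * |⟪τ, s⟫| := by
    calc c₁ ^ 2 * (‖σ‖ * ‖ρ‖) = c₁ * (c₁ * ‖σ‖ * ‖ρ‖) := by ring
      _ ≤ c₁ * |⟪τ, s⟫| := by gcongr
  -- both denominators dominate `c₁² ‖σ‖ ‖ρ‖`, the adjoint one through Cauchy–Schwarz
  obtain ⟨d, hαd, hd⟩ : ∃ d, α * d = 1 ∧ c₁ ^ 2 * (‖σ‖ * ‖ρ‖) ≤ |d| := by
    rcases hα with h | h
    · exact ⟨_, h, hforward.trans (mul_le_of_le_one_left (abs_nonneg _) hc₁1)⟩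
    · refine ⟨_, h, hforward.trans ?_⟩
      calc c₁ * |⟪τ, s⟫| ≤ c₁ * (‖τ‖ * ‖s‖) := by gcongr; exact abs_real_inner_le_norm τ s
        _ ≤ |⟪σ, ρ⟫| := by linarith
  have : c₁ ^ 2 * (|α| * (‖σ‖ * ‖ρ‖)) ≤ 1 := by
    calc c₁ ^ 2 * (|α| * (‖σ‖ * ‖ρ‖)) = |α| * (c₁ ^ 2 * (‖σ‖ * ‖ρ‖)) := by ring
      _ ≤ |α| * |d| := by gcongr
      _ = 1 := by rw [← abs_mul, hαd, abs_one]
  rwa [inv_eq_one_div, le_div_iff₀' (by positivity)]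

section TR1Step

variable {m n : ℕ} {A A' B : Matrix (Fin m) (Fin n) ℝ} {s γ τ : EuclideanSpace ℝ (Fin n)}
  {y σ ρ : EuclideanSpace ℝ (Fin m)} {α κ δ : ℝ}

lemma matVec_sub_of_eq_add_smul_outer (hA' : A' = A + α • outer ρ τ)
    (u : EuclideanSpace ℝ (Fin n)) :
    matVec (A' - B) u = matVec (A - B) u + (α * ⟪τ, u⟫) • ρ := by
  rw [hA', add_sub_right_comm, matVec_add_left, matVec_smul_outer]

theorem norm_matVec_sub_le_of_tr1Update (hτ : τ = γ - matVec Aᵀ σ) (hA' : A' = A + α • outer ρ τ)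
    (hγ : ‖γ - matVec Bᵀ σ‖ ≤ δ * ‖σ‖) (hδ : 0 ≤ δ) (hα : |α| * (‖σ‖ * ‖ρ‖) ≤ κ)
    (u : EuclideanSpace ℝ (Fin n)) :
    ‖matVec (A' - B) u‖ ≤ (1 + κ) * ‖matVec (A - B) u‖ + κ * δ * ‖u‖ := by
  set e := ‖matVec (A - B) u‖
  have hτu : |⟪τ, u⟫| ≤ ‖σ‖ * (δ * ‖u‖ + e) := by
    rw [hτ, inner_sub_matVec_transpose A B]
    calc |⟪γ - matVec Bᵀ σ, u⟫ - ⟪σ, matVec (A - B) u⟫|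
        ≤ ‖γ - matVec Bᵀ σ‖ * ‖u‖ + ‖σ‖ * e :=
          (abs_sub _ _).trans (add_le_add (abs_real_inner_le_norm _ _) (abs_real_inner_le_norm _ _))
      _ ≤ δ * ‖σ‖ * ‖u‖ + ‖σ‖ * e := by gcongr
      _ = ‖σ‖ * (δ * ‖u‖ + e) := by ring
  rw [matVec_sub_of_eq_add_smul_outer hA']
  calc ‖matVec (A - B) u + (α * ⟪τ, u⟫) • ρ‖ ≤ e + |α| * |⟪τ, u⟫| * ‖ρ‖ := by
        refine (norm_add_le _ _).trans_eq ?_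
        rw [norm_smul, Real.norm_eq_abs, abs_mul]
    _ ≤ e + |α| * (‖σ‖ * (δ * ‖u‖ + e)) * ‖ρ‖ := by gcongr
    _ = e + |α| * (‖σ‖ * ‖ρ‖) * (δ * ‖u‖ + e) := by ring
    _ ≤ e + κ * (δ * ‖u‖ + e) := by gcongr
    _ = (1 + κ) * e + κ * δ * ‖u‖ := by ring

theorem norm_matVec_sub_step_le_of_tr1Update (hρ : ρ = y - matVec A s) (hτ : τ = γ - matVec Aᵀ σ)
    (hA' : A' = A + α • outer ρ τ) (hy : ‖y - matVec B s‖ ≤ δ * ‖s‖)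
    (hγ : ‖γ - matVec Bᵀ σ‖ ≤ δ * ‖σ‖) (hδ : 0 ≤ δ)
    (hscaling : α * ⟪τ, s⟫ = 1 ∨ α * ⟪σ, ρ⟫ = 1) (hα : |α| * (‖σ‖ * ‖ρ‖) ≤ κ) :
    ‖matVec (A' - B) s‖ ≤ (1 + 2 * κ) * δ * ‖s‖ := by
  have hdiff : |⟪τ, s⟫ - ⟪σ, ρ⟫| ≤ 2 * δ * ‖σ‖ * ‖s‖ := by
    rw [hτ, hρ, inner_sub_matVec_transpose_sub_inner, ← inner_sub_matVec_transpose_sub_inner B]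
    calc |⟪γ - matVec Bᵀ σ, s⟫ - ⟪σ, y - matVec B s⟫|
        ≤ ‖γ - matVec Bᵀ σ‖ * ‖s‖ + ‖σ‖ * ‖y - matVec B s‖ :=
          (abs_sub _ _).trans (add_le_add (abs_real_inner_le_norm _ _) (abs_real_inner_le_norm _ _))
      _ ≤ δ * ‖σ‖ * ‖s‖ + ‖σ‖ * (δ * ‖s‖) := by gcongr
      _ = 2 * δ * ‖σ‖ * ‖s‖ := by ring
  have hcoef : |α * ⟪τ, s⟫ - 1| ≤ |α| * |⟪τ, s⟫ - ⟪σ, ρ⟫| := by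
    rcases hscaling with h | h
    · rw [h, sub_self, abs_zero]
      positivity
    · rw [← h, ← mul_sub, abs_mul]
  have hAs : matVec A s = y - ρ := by rw [hρ, sub_sub_cancel]
  have hs : matVec (A' - B) s = (y - matVec B s) + (α * ⟪τ, s⟫ - 1) • ρ := by
    rw [matVec_sub_of_eq_add_smul_outer hA', sub_smul, one_smul, matVec_sub_left, hAs]
    abel
  rw [hs]
  calc ‖y - matVec B s + (α * ⟪τ, s⟫ - 1) • ρ‖
      ≤ δ * ‖s‖ + |α| * (2 * δ * ‖σ‖ * ‖s‖) * ‖ρ‖ := by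
        refine (norm_add_le _ _).trans (add_le_add hy ?_)
        rw [norm_smul, Real.norm_eq_abs]
        gcongr
        exact hcoef.trans (by gcongr)
    _ = δ * ‖s‖ + |α| * (‖σ‖ * ‖ρ‖) * (2 * δ * ‖s‖) := by ring
    _ ≤ δ * ‖s‖ + κ * (2 * δ * ‖s‖) := by gcongr
    _ = (1 + 2 * κ) * δ * ‖s‖ := by ring

end TR1Step

theorem norm_le_of_norm_matVec_basis_le {m q : ℕ} {M : Matrix (Fin m) (Fin q) ℝ}
    {v : Fin q → EuclideanSpace ℝ (Fin q)} {C c₄ : ℝ} (hC : 0 ≤ C) (hc₄ : 0 < c₄)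
    (hv : ∀ j, v j ≠ 0) (hM : ∀ j, ‖matVec M (v j)‖ ≤ C * ‖v j‖)
    (hV : ∀ x, c₄ * ‖x‖ ≤ ‖matVec (Matrix.of fun i j => v j i / ‖v j‖) x‖) :
    ‖M‖ ≤ q * C / c₄ := by
  set V : Matrix (Fin q) (Fin q) ℝ := Matrix.of fun i j => v j i / ‖v j‖
  have hinj : Function.Injective (Matrix.toEuclideanLin V) :=
    (injective_iff_map_eq_zero _).2 fun z hz => norm_le_zero_iff.1 <| by
      have := hV z
      rw [matVec, hz, norm_zero] at this
      nlinarith [norm_nonneg z]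
  refine norm_le_of_norm_matVec_le (by positivity) fun x => ?_
  obtain ⟨z, rfl⟩ := LinearMap.injective_iff_surjective.1 hinj x
  have hz : matVec M (matVec V z) = ∑ j, (z j / ‖v j‖) • matVec M (v j) := by
    have hVz : matVec V z = ∑ j, (z j / ‖v j‖) • v j := by
      ext i
      simp only [matVec, Matrix.ofLp_toLpLin, Matrix.toLin'_apply, Matrix.mulVec, dotProduct,
        Matrix.of_apply, WithLp.ofLp_sum, WithLp.ofLp_smul, Finset.sum_apply, Pi.smul_apply,
        smul_eq_mul, V]
      exact Finset.sum_congr rfl fun j _ => by ring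
    rw [hVz]
    simp [matVec]
  change ‖matVec M (matVec V z)‖ ≤ q * C / c₄ * ‖matVec V z‖
  calc ‖matVec M (matVec V z)‖ ≤ ∑ _j : Fin q, C * ‖z‖ := by
        rw [hz]
        refine norm_sum_le_of_le _ fun j _ => ?_
        have hvj : 0 < ‖v j‖ := norm_pos_iff.2 (hv j)
        calc ‖(z j / ‖v j‖) • matVec M (v j)‖ ≤ |z j| / ‖v j‖ * (C * ‖v j‖) := by
              rw [norm_smul, Real.norm_eq_abs, abs_div, abs_norm]
              gcongr
              exact hM j
          _ = C * |z j| := by field_simp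
          _ ≤ C * ‖z‖ := by gcongr; exact PiLp.norm_apply_le z j
    _ = q * C / c₄ * (c₄ * ‖z‖) := by
        rw [Finset.sum_const, Finset.card_univ, Fintype.card_fin, nsmul_eq_mul]
        field_simp
    _ ≤ q * C / c₄ * ‖matVec V z‖ := by gcongr; exact hV z

section Convergence

variable {m n : ℕ} {A : ℕ → Matrix (Fin m) (Fin n) ℝ} {B : Matrix (Fin m) (Fin n) ℝ}
  {s : ℕ → EuclideanSpace ℝ (Fin n)} {δ : ℕ → ℝ} {κ : ℝ}

open Finset in
theorem norm_matVec_sub_le_of_mem_window (hκ : 0 ≤ κ) (hδ : ∀ k, 0 ≤ δ k)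
    (hgrowth : ∀ k u, ‖matVec (A (k + 1) - B) u‖ ≤ (1 + κ) * ‖matVec (A k - B) u‖ + κ * δ k * ‖u‖)
    (hsecant : ∀ k, ‖matVec (A (k + 1) - B) (s k)‖ ≤ (1 + 2 * κ) * δ k * ‖s k‖)
    {k l j : ℕ} (hkj : k ≤ j) (hjl : j ≤ k + l) :
    ‖matVec (A (k + l + 1) - B) (s j)‖ ≤
      (1 + 3 * κ) * Real.exp (l * κ) * (∑ i ∈ Ico k (k + l + 1), δ i) * ‖s j‖ := by
  set S := ∑ i ∈ Ico k (k + l + 1), δ i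
  have hδS : δ j ≤ S := single_le_sum (fun i _ => hδ i) (mem_Ico.2 ⟨hkj, by omega⟩)
  have hsum : ∑ i ∈ Ico (j + 1) (k + l + 1), κ * δ i * ‖s j‖ ≤ κ * S * ‖s j‖ := by
    rw [← sum_mul, ← mul_sum]
    gcongr
    exact sum_le_sum_of_subset_of_nonneg (Ico_subset_Ico (by omega) le_rfl) fun i _ _ => hδ i
  have hexp : Real.exp (∑ _i ∈ Ico (j + 1) (k + l + 1), κ) ≤ Real.exp (l * κ) := by
    rw [sum_const, Nat.card_Ico, nsmul_eq_mul]
    gcongr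
    exact_mod_cast (by omega : k + l + 1 - (j + 1) ≤ l)
  calc ‖matVec (A (k + l + 1) - B) (s j)‖
      ≤ (‖matVec (A (j + 1) - B) (s j)‖ + ∑ i ∈ Ico (j + 1) (k + l + 1), κ * δ i * ‖s j‖) *
          Real.exp (∑ _i ∈ Ico (j + 1) (k + l + 1), κ) :=
        discrete_gronwall (u := fun i => ‖matVec (A i - B) (s j)‖) (norm_nonneg _)
          (fun i _ => hgrowth i (s j)) (fun _ _ => hκ) (fun i _ => by have := hδ i; positivity)
          (by omega)
    _ ≤ ((1 + 2 * κ) * S * ‖s j‖ + κ * S * ‖s j‖) * Real.exp (l * κ) := by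
        have hS : 0 ≤ S := sum_nonneg fun i _ => hδ i
        refine mul_le_mul (add_le_add ((hsecant j).trans (by gcongr)) hsum) hexp
          (by positivity) (by positivity)
    _ = (1 + 3 * κ) * Real.exp (l * κ) * S * ‖s j‖ := by ring

theorem tendsto_norm_sub_mul_of_uniformLinearIndependence {q : ℕ} (hκ : 0 ≤ κ)
    (hδ0 : ∀ k, 0 ≤ δ k) (hδ : Tendsto δ atTop (nhds 0))
    (hgrowth : ∀ k u, ‖matVec (A (k + 1) - B) u‖ ≤ (1 + κ) * ‖matVec (A k - B) u‖ + κ * δ k * ‖u‖)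
    (hsecant : ∀ k, ‖matVec (A (k + 1) - B) (s k)‖ ≤ (1 + 2 * κ) * δ k * ‖s k‖)
    {N : Matrix (Fin n) (Fin q) ℝ} (hN : Nᵀ * N = 1) {c₄ : ℝ} (hc₄ : 0 < c₄) {l k₀ : ℕ}
    (hULI : ∀ k, k₀ ≤ k → ∃ ks : Fin q → ℕ, (∀ j, k ≤ ks j ∧ ks j ≤ k + l) ∧
      ∃ v : Fin q → EuclideanSpace ℝ (Fin q), (∀ j, v j ≠ 0) ∧
        (∀ j, s (ks j) = matVec N (v j)) ∧
        (∀ x : EuclideanSpace ℝ (Fin q),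
          c₄ * ‖x‖ ≤ ‖matVec (Matrix.of fun i j => v j i / ‖v j‖) x‖)) :
    Tendsto (fun k => ‖(A k - B) * N‖) atTop (nhds 0) := by
  set C := (1 + 3 * κ) * Real.exp (l * κ)
  have hwindow : ∀ k, k₀ ≤ k →
      ‖(A (k + (l + 1)) - B) * N‖ ≤ q * (C * ∑ i ∈ Finset.Ico k (k + l + 1), δ i) / c₄ := by
    intro k hk
    obtain ⟨ks, hks, v, hv, hsv, hV⟩ := hULI k hk
    have hS0 : 0 ≤ ∑ i ∈ Finset.Ico k (k + l + 1), δ i := Finset.sum_nonneg fun i _ => hδ0 i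
    refine norm_le_of_norm_matVec_basis_le (by positivity) hc₄ hv (fun j => ?_) hV
    rw [matVec_mul, ← hsv, ← norm_matVec_of_transpose_mul_self hN (v j), ← hsv]
    exact norm_matVec_sub_le_of_mem_window hκ hδ0 hgrowth hsecant (hks j).1 (hks j).2
  have hS : Tendsto (fun k => ∑ i ∈ Finset.Ico k (k + l + 1), δ i) atTop (nhds 0) := by
    simp_rw [Finset.sum_Ico_eq_sum_range, show ∀ k, k + l + 1 - k = l + 1 by omega]
    simpa using tendsto_finsetSum _ fun i _ => hδ.comp (tendsto_add_atTop_nat i)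
  rw [← tendsto_add_atTop_iff_nat (l + 1)]
  refine squeeze_zero' (Eventually.of_forall fun k => norm_nonneg _)
    ((eventually_ge_atTop k₀).mono hwindow) ?_
  simpa using ((hS.const_mul C).const_mul (q : ℝ)).div_const c₄

end Convergence

theorem tr1_jacobian_convergence_on_nullspace_general {n m q : ℕ}
    (c₁ c₃ : ℝ) (hc₁0 : 0 < c₁) (hc₁1 : c₁ < 1)
    (F : EuclideanSpace ℝ (Fin n) → EuclideanSpace ℝ (Fin m))
    (J : EuclideanSpace ℝ (Fin n) → Matrix (Fin m) (Fin n) ℝ)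
    (hJ : ∀ w, HasFDerivAt F (LinearMap.toContinuousLinearMap (Matrix.toEuclideanLin (J w))) w)
    (hLip : ∀ w₁ w₂, ‖J w₁ - J w₂‖ ≤ c₃ * ‖w₁ - w₂‖)
    (w : ℕ → EuclideanSpace ℝ (Fin n)) (σ : ℕ → EuclideanSpace ℝ (Fin m))
    (A : ℕ → Matrix (Fin m) (Fin n) ℝ)
    (s : ℕ → EuclideanSpace ℝ (Fin n)) (hs : ∀ k, s k = w (k + 1) - w k)
    (y : ℕ → EuclideanSpace ℝ (Fin m)) (hy : ∀ k, y k = F (w (k + 1)) - F (w k))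
    (γ : ℕ → EuclideanSpace ℝ (Fin n)) (hγ : ∀ k, γ k = matVec (J (w (k + 1)))ᵀ (σ k))
    (ρ : ℕ → EuclideanSpace ℝ (Fin m)) (hρ : ∀ k, ρ k = y k - matVec (A k) (s k))
    (τ : ℕ → EuclideanSpace ℝ (Fin n)) (hτ : ∀ k, τ k = γ k - matVec (A k)ᵀ (σ k))
    (hskip1 : ∀ k, c₁ * ‖σ k‖ * ‖ρ k‖ ≤ |⟪τ k, s k⟫|)
    (hskip2 : ∀ k, c₁ * ‖s k‖ * ‖τ k‖ ≤ |⟪σ k, ρ k⟫|)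
    (hupd : ∀ k,
      (⟪τ k, s k⟫ ≠ 0 ∧ A (k + 1) = A k + (1 / ⟪τ k, s k⟫) • outer (ρ k) (τ k)) ∨
      (⟪σ k, ρ k⟫ ≠ 0 ∧ A (k + 1) = A k + (1 / ⟪σ k, ρ k⟫) • outer (ρ k) (τ k)))
    (wstar : EuclideanSpace ℝ (Fin n)) (hconv : Tendsto w atTop (nhds wstar))
    (N : Matrix (Fin n) (Fin q) ℝ) (hN : Nᵀ * N = 1)
    (c₄ : ℝ) (hc₄ : 0 < c₄) (l k₀ : ℕ)
    (hULI : ∀ k, k₀ ≤ k → ∃ ks : Fin q → ℕ, StrictMono ks ∧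
      (∀ j, k ≤ ks j ∧ ks j ≤ k + l) ∧
      ∃ v : Fin q → EuclideanSpace ℝ (Fin q), (∀ j, v j ≠ 0) ∧
        (∀ j, s (ks j) = matVec N (v j)) ∧
        (∀ x : EuclideanSpace ℝ (Fin q),
          c₄ * ‖x‖ ≤ ‖matVec (Matrix.of fun i j => v j i / ‖v j‖) x‖)) :
    Tendsto (fun k => ‖(A k - J wstar) * N‖) atTop (nhds 0) := by
  set L := max c₃ 0
  have hJL : ∀ x, ‖J x - J wstar‖ ≤ L * ‖x - wstar‖ := fun x =>
    (hLip x wstar).trans (by gcongr; exact le_max_left _ _)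
  set δ := fun k => L * max ‖w k - wstar‖ ‖w (k + 1) - wstar‖
  have hδ0 : ∀ k, 0 ≤ δ k := fun k => by positivity
  have hδ : Tendsto δ atTop (nhds 0) := by
    have hε := tendsto_iff_norm_sub_tendsto_zero.1 hconv
    simpa using (hε.max (hε.comp (tendsto_add_atTop_nat 1))).const_mul L
  have hy' : ∀ k, ‖y k - matVec (J wstar) (s k)‖ ≤ δ k * ‖s k‖ := fun k => by
    rw [hy, hs]
    exact norm_sub_sub_fderiv_le hJ (fun x => by rw [← map_sub, ← map_sub]; exact hJL x)
      (le_max_right _ _) _ _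
  have hγ' : ∀ k, ‖γ k - matVec (J wstar)ᵀ (σ k)‖ ≤ δ k * ‖σ k‖ := fun k => by
    rw [hγ, ← matVec_sub_left, ← Matrix.transpose_sub]
    exact (norm_matVec_transpose_le _ _).trans <| mul_le_mul_of_nonneg_right ((hJL _).trans
      (mul_le_mul_of_nonneg_left (le_max_right _ _) (le_max_right _ _)))
      (norm_nonneg _)
  have hstep : ∀ k, ∃ α, A (k + 1) = A k + α • outer (ρ k) (τ k) ∧
      (α * ⟪τ k, s k⟫ = 1 ∨ α * ⟪σ k, ρ k⟫ = 1) ∧ |α| * (‖σ k‖ * ‖ρ k‖) ≤ (c₁ ^ 2)⁻¹ := by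
    intro k
    obtain ⟨α, hA, hα⟩ : ∃ α, A (k + 1) = A k + α • outer (ρ k) (τ k) ∧
        (α * ⟪τ k, s k⟫ = 1 ∨ α * ⟪σ k, ρ k⟫ = 1) := by
      rcases hupd k with ⟨h, hA⟩ | ⟨h, hA⟩
      exacts [⟨_, hA, .inl (one_div_mul_cancel h)⟩, ⟨_, hA, .inr (one_div_mul_cancel h)⟩]
    exact ⟨α, hA, hα, abs_mul_norm_mul_norm_le_of_skip hc₁0 hc₁1.le (hskip1 k) (hskip2 k) hα⟩
  refine tendsto_norm_sub_mul_of_uniformLinearIndependence (κ := (c₁ ^ 2)⁻¹) (s := s) (l := l)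
    (k₀ := k₀) (by positivity) hδ0 hδ (fun k u => ?_) (fun k => ?_) hN hc₄ fun k hk => ?_
  · obtain ⟨α, hA, -, hκ⟩ := hstep k
    exact norm_matVec_sub_le_of_tr1Update (hτ k) hA (hγ' k) (hδ0 k) hκ u
  · obtain ⟨α, hA, hα, hκ⟩ := hstep k
    exact norm_matVec_sub_step_le_of_tr1Update (hρ k) (hτ k) hA (hy' k) (hγ' k) (hδ0 k) hα hκ
  · obtain ⟨ks, -, hks⟩ := hULI k hk
    exact ⟨ks, hks⟩

/-- Theorem 3: convergence of the dynamic TR1 Jacobian approximations to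
the exact Jacobian on the range of `N` (the null space of the active constraints),
under the uniform linear independence assumption.  In the uniform linear independence
hypothesis, "the matrix with columns `vʲ/‖vʲ‖` has minimum singular value at least `c₄`"
is expressed as `c₄‖x‖ ≤ ‖V x‖` for all `x`. -/
theorem tr1_jacobian_convergence_on_nullspace {n m q : ℕ}
    (c₁ c₃ : ℝ) (hc₁0 : 0 < c₁) (hc₁1 : c₁ < 1)
    (F : EuclideanSpace ℝ (Fin n) → EuclideanSpace ℝ (Fin m))
    (J : EuclideanSpace ℝ (Fin n) → Matrix (Fin m) (Fin n) ℝ)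
    (hJ : ∀ w, HasFDerivAt F (LinearMap.toContinuousLinearMap (Matrix.toEuclideanLin (J w))) w)
    (hLip : ∀ w₁ w₂, ‖J w₁ - J w₂‖ ≤ c₃ * ‖w₁ - w₂‖)
    (w : ℕ → EuclideanSpace ℝ (Fin n)) (σ : ℕ → EuclideanSpace ℝ (Fin m))
    (A : ℕ → Matrix (Fin m) (Fin n) ℝ)
    (s : ℕ → EuclideanSpace ℝ (Fin n)) (hs : ∀ k, s k = w (k + 1) - w k)
    (y : ℕ → EuclideanSpace ℝ (Fin m)) (hy : ∀ k, y k = F (w (k + 1)) - F (w k))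
    (γ : ℕ → EuclideanSpace ℝ (Fin n)) (hγ : ∀ k, γ k = matVec (J (w (k + 1)))ᵀ (σ k))
    (ρ : ℕ → EuclideanSpace ℝ (Fin m)) (hρ : ∀ k, ρ k = y k - matVec (A k) (s k))
    (τ : ℕ → EuclideanSpace ℝ (Fin n)) (hτ : ∀ k, τ k = γ k - matVec (A k)ᵀ (σ k))
    (hσ : ∀ k, σ k ≠ 0)
    (hskip1 : ∀ k, c₁ * ‖σ k‖ * ‖ρ k‖ ≤ |⟪τ k, s k⟫|)
    (hskip2 : ∀ k, c₁ * ‖s k‖ * ‖τ k‖ ≤ |⟪σ k, ρ k⟫|)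
    (hupd : ∀ k,
      (⟪τ k, s k⟫ ≠ 0 ∧ A (k + 1) = A k + (1 / ⟪τ k, s k⟫) • outer (ρ k) (τ k)) ∨
      (⟪σ k, ρ k⟫ ≠ 0 ∧ A (k + 1) = A k + (1 / ⟪σ k, ρ k⟫) • outer (ρ k) (τ k)))
    (wstar : EuclideanSpace ℝ (Fin n)) (hconv : Tendsto w atTop (nhds wstar))
    (N : Matrix (Fin n) (Fin q) ℝ) (hN : Nᵀ * N = 1)
    (c₄ : ℝ) (hc₄ : 0 < c₄) (l k₀ : ℕ) (hl : q ≤ l)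
    (hULI : ∀ k, k₀ ≤ k → ∃ ks : Fin q → ℕ, StrictMono ks ∧
      (∀ j, k ≤ ks j ∧ ks j ≤ k + l) ∧
      ∃ v : Fin q → EuclideanSpace ℝ (Fin q), (∀ j, v j ≠ 0) ∧
        (∀ j, s (ks j) = matVec N (v j)) ∧
        (∀ x : EuclideanSpace ℝ (Fin q),
          c₄ * ‖x‖ ≤ ‖matVec (Matrix.of fun i j => v j i / ‖v j‖) x‖)) :
    Tendsto (fun k => ‖(A k - J wstar) * N‖) atTop (nhds 0) :=
  tr1_jacobian_convergence_on_nullspace_general c₁ c₃ hc₁0 hc₁1 F J hJ hLip w σ A s hs y hy γ hγ ρ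
    hρ τ hτ hskip1 hskip2 hupd wstar hconv N hN c₄ hc₄ l k₀ hULI
end

section
/- (Lemma 2, spectrum equality of Newton-type iteration matrices.) Let H and W be symmetric real n×n matrices, let B and B̃ be real m×n matrices, let P be a real p×n matrix of full row rank p, and let N ∈ ℝ^{n×(n−p)} have orthonormal columns (NᵀN = I) spanning the null space of P (P N = 0). Assume (B̃ − B) N = 0. Define the (n+m+p)×(n+m+p) block matrices K̃ = [[H, B̃ᵀ, Pᵀ],[B̃, 0, 0],[P, 0, 0]], K_GN = [[H, Bᵀ, Pᵀ],[B, 0, 0],[P, 0, 0]], and K = [[W, Bᵀ, Pᵀ],[B, 0, 0],[P, 0, 0]], and assume K̃ and K_GN are invertible. Then the sets of complex eigenvalues of the two iteration matrices coincide: σ(K̃⁻¹K − I) = σ(K_GN⁻¹K − I), where σ denotes the spectrum over ℂ of (the complexification of) a real matrix. -/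
/-!
Since `B̃ - B` vanishes on `ker P = range N`, we have `B̃ = B + C P` for some `C`, i.e. the
constraint block `[B̃; P]` of `K̃` is `F [B; P]` with `F = [[1, C], [0, 1]]`. For `z = λ + 1` the
matrix `z K̃ - K` is the KKT matrix of `(z H - W, (z F - 1) [B; P])`, a congruence of the KKT
matrix of `(z H - W, [B; P])` by `diag(1, z F - 1)`. As `z F - 1` is block triangular,
`det (z F - 1) = (z - 1) ^ (m + p) = det ((z - 1) • 1)`, so `det (z K̃ - K) = det (z K_GN - K)`
for every `z`, and both spectra are the zero sets of these determinants.
-/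

open scoped Matrix

namespace Matrix

section KKT

variable {R : Type*} [CommRing R] {n k : Type*}

def kktMatrix (H : Matrix n n R) (A : Matrix k n R) : Matrix (n ⊕ k) (n ⊕ k) R :=
  fromBlocks H Aᵀ A 0

lemma kktMatrix_map {S : Type*} [CommRing S] (f : R →+* S) (H : Matrix n n R)
    (A : Matrix k n R) : (kktMatrix H A).map f = kktMatrix (H.map f) (A.map f) := by
  simp [kktMatrix, fromBlocks_map, transpose_map]

lemma smul_kktMatrix_sub_kktMatrix (z : R) (H W : Matrix n n R) (A A' : Matrix k n R) :
    z • kktMatrix H A - kktMatrix W A' = kktMatrix (z • H - W) (z • A - A') := by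
  ext (i | i) (j | j) <;> simp [kktMatrix]

lemma det_smul_fromBlocks_one_sub_one [Fintype k] [DecidableEq k] {l : Type*} [Fintype l]
    [DecidableEq l] (C : Matrix k l R) (z : R) :
    (z • fromBlocks 1 C 0 1 - 1).det = (z • 1 - 1 : Matrix (k ⊕ l) (k ⊕ l) R).det := by
  simp only [← fromBlocks_one, fromBlocks_smul, sub_eq_add_neg, fromBlocks_neg, fromBlocks_add,
    smul_zero, neg_zero, add_zero, det_fromBlocks_zero₂₁]

variable [Fintype n] [Fintype k] [DecidableEq n] [DecidableEq k]

lemma det_kktMatrix_mul (H : Matrix n n R) (G : Matrix k k R) (A : Matrix k n R) :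
    (kktMatrix H (G * A)).det = G.det ^ 2 * (kktMatrix H A).det := by
  have hconj : kktMatrix H (G * A) =
      fromBlocks 1 0 0 G * kktMatrix H A * fromBlocks 1 0 0 Gᵀ := by
    simp [kktMatrix, fromBlocks_multiply, transpose_mul]
  rw [hconj, det_mul, det_mul, det_fromBlocks_zero₂₁, det_fromBlocks_zero₂₁, det_one,
    det_transpose]
  ring

lemma det_smul_kktMatrix_mul_sub (z : R) (H W : Matrix n n R) (F : Matrix k k R)
    (A : Matrix k n R) :
    (z • kktMatrix H (F * A) - kktMatrix W A).det =
      (z • F - 1).det ^ 2 * (kktMatrix (z • H - W) A).det := by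
  rw [smul_kktMatrix_sub_kktMatrix, ← det_kktMatrix_mul, Matrix.sub_mul, Matrix.smul_mul,
    Matrix.one_mul]

lemma det_smul_kktMatrix_fromBlocks_mul_sub {l : Type*} [Fintype l] [DecidableEq l]
    (z : R) (H W : Matrix n n R) (C : Matrix k l R) (A : Matrix (k ⊕ l) n R) :
    (z • kktMatrix H ((fromBlocks 1 C 0 1 : Matrix (k ⊕ l) (k ⊕ l) R) * A) -
      kktMatrix W A).det = (z • kktMatrix H A - kktMatrix W A).det := by
  rw [det_smul_kktMatrix_mul_sub, det_smul_fromBlocks_one_sub_one,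
    ← det_smul_kktMatrix_mul_sub, Matrix.one_mul]

end KKT

lemma mem_spectrum_iff_det_smul_sub_eq_zero {𝕜 ι : Type*} [Field 𝕜] [Fintype ι]
    [DecidableEq ι] {M K X : Matrix ι ι 𝕜} (hM : IsUnit M) (hX : M * X = K - M) (μ : 𝕜) :
    μ ∈ spectrum 𝕜 X ↔ ((μ + 1) • M - K).det = 0 := by
  obtain ⟨u, rfl⟩ := hM
  have hfactor : (μ + 1) • (u : Matrix ι ι 𝕜) - K = u * (algebraMap 𝕜 _ μ - X) := by
    rw [mul_sub, hX, Algebra.algebraMap_eq_smul_one, Matrix.mul_smul, mul_one, add_smul,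
      one_smul]
    abel
  rw [hfactor, spectrum.mem_iff, ← Units.isUnit_units_mul u, isUnit_iff_isUnit_det,
    isUnit_iff_ne_zero, not_not]

variable {K : Type*} [Field K]

lemma mem_spectrum_map_inv_mul_sub_one_iff {L ι : Type*} [Field L] [Fintype ι] [DecidableEq ι]
    (f : K →+* L) {M A : Matrix ι ι K} (hM : IsUnit M) (μ : L) :
    μ ∈ spectrum L ((M⁻¹ * A - 1).map f) ↔ ((μ + 1) • M.map f - A.map f).det = 0 := by
  have hMA : M * (M⁻¹ * A - 1) = A - M := by
    rw [Matrix.mul_sub, ← Matrix.mul_assoc, mul_nonsing_inv _ ((isUnit_iff_isUnit_det M).mp hM),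
      Matrix.one_mul, Matrix.mul_one]
  refine mem_spectrum_iff_det_smul_sub_eq_zero (hM.map f.mapMatrix) ?_ μ
  rw [← RingHom.mapMatrix_apply, ← RingHom.mapMatrix_apply, ← map_mul, hMA, map_sub]

lemma rank_eq_card_width_of_mul_eq_one {m n : Type*} [Fintype m] [Fintype n] [DecidableEq n]
    {L : Matrix n m K} {N : Matrix m n K} (hLN : L * N = 1) :
    N.rank = Fintype.card n :=
  le_antisymm N.rank_le_card_width (by simpa [hLN, rank_one] using L.rank_mul_le_right N)

lemma ker_mulVecLin_eq_range_mulVecLin {m n k : Type*} [Fintype n] [Fintype k]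
    (P : Matrix m n K) (N : Matrix n k K) (hPN : P * N = 0)
    (hrank : P.rank + N.rank = Fintype.card n) :
    LinearMap.ker P.mulVecLin = LinearMap.range N.mulVecLin := by
  refine (Submodule.eq_of_le_of_finrank_eq ?_ ?_).symm
  · rw [LinearMap.range_le_ker_iff, ← mulVecLin_mul, hPN, mulVecLin_zero]
  · have := LinearMap.finrank_range_add_finrank_ker P.mulVecLin
    rw [Module.finrank_fintype_fun_eq_card] at this
    change P.rank + _ = _ at this
    change N.rank = _
    omega

lemma exists_eq_mul_of_ker_le {l m n : Type*} [Fintype m] [Fintype n] [DecidableEq n]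
    {P : Matrix m n K} (hP : P.rank = Fintype.card m) {D : Matrix l n K}
    (hker : LinearMap.ker P.mulVecLin ≤ LinearMap.ker D.mulVecLin) :
    ∃ C : Matrix l m K, D = C * P := by
  classical
  have hsurj : LinearMap.range P.mulVecLin = ⊤ :=
    Submodule.eq_top_of_finrank_eq (by rw [Module.finrank_fintype_fun_eq_card, ← hP]; rfl)
  obtain ⟨g, hg⟩ := P.mulVecLin.exists_rightInverse_of_surjective hsurj
  refine ⟨D * LinearMap.toMatrix' g, ext_iff_mulVec.mpr fun x => ?_⟩
  have hPg : P *ᵥ g (P *ᵥ x) = P *ᵥ x := LinearMap.congr_fun hg (P *ᵥ x)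
  have hx : x - g (P *ᵥ x) ∈ LinearMap.ker D.mulVecLin :=
    hker (by simp [mulVec_sub, hPg])
  rw [LinearMap.mem_ker, mulVecLin_apply, mulVec_sub, sub_eq_zero] at hx
  rw [hx, ← mulVec_mulVec, ← mulVec_mulVec, LinearMap.toMatrix'_mulVec]

lemma exists_eq_mul_of_mul_eq_zero {l m n k : Type*} [Fintype m] [Fintype n] [Fintype k]
    [DecidableEq n] {P : Matrix m n K} {N : Matrix n k K} {D : Matrix l n K}
    (hP : P.rank = Fintype.card m) (hPN : P * N = 0)
    (hrank : P.rank + N.rank = Fintype.card n) (hDN : D * N = 0) :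
    ∃ C : Matrix l m K, D = C * P :=
  exists_eq_mul_of_ker_le hP <| (ker_mulVecLin_eq_range_mulVecLin P N hPN hrank).trans_le <|
    LinearMap.range_le_ker_iff.mpr (by rw [← mulVecLin_mul, hDN, mulVecLin_zero])

end Matrix

open Matrix

theorem spectrum_iteration_matrix_eq_general {n m p : ℕ}
    (H W : Matrix (Fin n) (Fin n) ℝ)
    (B Bt : Matrix (Fin m) (Fin n) ℝ)
    (P : Matrix (Fin p) (Fin n) ℝ) (hP : P.rank = p)
    (N : Matrix (Fin n) (Fin (n - p)) ℝ) (hN : Nᵀ * N = 1) (hPN : P * N = 0)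
    (hBN : (Bt - B) * N = 0)
    (Kt Kgn K : Matrix (Fin n ⊕ (Fin m ⊕ Fin p)) (Fin n ⊕ (Fin m ⊕ Fin p)) ℝ)
    (hKt : Kt = Matrix.fromBlocks H (Matrix.fromCols Btᵀ Pᵀ) (Matrix.fromRows Bt P) 0)
    (hKgn : Kgn = Matrix.fromBlocks H (Matrix.fromCols Bᵀ Pᵀ) (Matrix.fromRows B P) 0)
    (hK : K = Matrix.fromBlocks W (Matrix.fromCols Bᵀ Pᵀ) (Matrix.fromRows B P) 0)
    (hKtinv : IsUnit Kt) (hKgninv : IsUnit Kgn) :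
    spectrum ℂ ((Kt⁻¹ * K - 1).map (Complex.ofReal ·)) =
      spectrum ℂ ((Kgn⁻¹ * K - 1).map (Complex.ofReal ·)) := by
  have hNrank : N.rank = n - p := by simpa using rank_eq_card_width_of_mul_eq_one hN
  have hrank : P.rank + N.rank = Fintype.card (Fin n) := by
    have := P.rank_le_width
    rw [Fintype.card_fin]
    omega
  obtain ⟨C, hC⟩ := exists_eq_mul_of_mul_eq_zero (by simpa using hP) hPN hrank hBN
  have hA : fromRows Bt P =
      (fromBlocks 1 C 0 1 : Matrix (Fin m ⊕ Fin p) (Fin m ⊕ Fin p) ℝ) * fromRows B P := by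
    rw [fromBlocks_mul_fromRows, ← hC]
    simp
  have hkkt (X : Matrix (Fin n) (Fin n) ℝ) (Y : Matrix (Fin m) (Fin n) ℝ) :
      fromBlocks X (fromCols Yᵀ Pᵀ) (fromRows Y P) 0 = kktMatrix X (fromRows Y P) := by
    rw [kktMatrix, transpose_fromRows]
  rw [hkkt] at hKt hKgn hK
  subst hKt hKgn hK
  rw [show (Complex.ofReal ·) = ⇑Complex.ofRealHom from rfl]
  ext μ
  rw [mem_spectrum_map_inv_mul_sub_one_iff Complex.ofRealHom hKtinv,
    mem_spectrum_map_inv_mul_sub_one_iff Complex.ofRealHom hKgninv, hA, kktMatrix_map,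
    kktMatrix_map, kktMatrix_map, Matrix.map_mul]
  simp only [fromBlocks_map, Matrix.map_one _ (map_zero _) (map_one _),
    Matrix.map_zero _ (map_zero _)]
  rw [det_smul_kktMatrix_fromBlocks_mul_sub]

/-- Lemma 2: the iteration matrices of the block-TR1 based method and of
the exact-Jacobian Gauss-Newton method have the same complex spectrum at the solution. -/
theorem spectrum_iteration_matrix_eq {n m p : ℕ}
    (H W : Matrix (Fin n) (Fin n) ℝ) (hHsymm : H.IsSymm) (hWsymm : W.IsSymm)
    (B Bt : Matrix (Fin m) (Fin n) ℝ)
    (P : Matrix (Fin p) (Fin n) ℝ) (hP : P.rank = p)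
    (N : Matrix (Fin n) (Fin (n - p)) ℝ) (hN : Nᵀ * N = 1) (hPN : P * N = 0)
    (hBN : (Bt - B) * N = 0)
    (Kt Kgn K : Matrix (Fin n ⊕ (Fin m ⊕ Fin p)) (Fin n ⊕ (Fin m ⊕ Fin p)) ℝ)
    (hKt : Kt = Matrix.fromBlocks H (Matrix.fromCols Btᵀ Pᵀ) (Matrix.fromRows Bt P) 0)
    (hKgn : Kgn = Matrix.fromBlocks H (Matrix.fromCols Bᵀ Pᵀ) (Matrix.fromRows B P) 0)
    (hK : K = Matrix.fromBlocks W (Matrix.fromCols Bᵀ Pᵀ) (Matrix.fromRows B P) 0)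
    (hKtinv : IsUnit Kt) (hKgninv : IsUnit Kgn) :
    spectrum ℂ ((Kt⁻¹ * K - 1).map (Complex.ofReal ·)) =
      spectrum ℂ ((Kgn⁻¹ * K - 1).map (Complex.ofReal ·)) :=
  spectrum_iteration_matrix_eq_general H W B Bt P hP N hN hPN hBN Kt Kgn K hKt hKgn hK hKtinv
    hKgninv
end

section
/- (Newton-type q-linear convergence under the κ-condition, core of Theorem 1 (iv)–(v).) Let F : ℝᵈ → ℝᵈ be continuously differentiable, let (Jᵏ)ₖ be a sequence of invertible d×d real matrices with ‖Jᵏ‖ ≤ B and ‖(Jᵏ)⁻¹‖ ≤ β for all k, and let the iterates satisfy y^{k+1} = y^k − (Jᵏ)⁻¹F(y^k), with steps Δy^k = y^{k+1} − y^k. Suppose there exists κ < 1 such that for all k and all t ∈ [0,1], ‖(J^{k+1})⁻¹ (Jᵏ − DF(y^k + t Δy^k)) Δy^k‖ ≤ κ ‖Δy^k‖. Then ‖Δy^{k+1}‖ ≤ κ‖Δy^k‖ for all k; consequently the sequence (y^k) converges to a limit y* with ‖y^k − y*‖ ≤ ‖Δy^k‖/(1 − κ), the convergence is q-linear with rate κ,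 and F(y*) = 0. -/
/-!
Since `Jᵏ Δyᵏ = -F(yᵏ)`, the next step is `Δyᵏ⁺¹ = (Jᵏ⁺¹)⁻¹ (Jᵏ Δyᵏ - (F(yᵏ + Δyᵏ) - F(yᵏ)))`.
Applying the mean value inequality to `t ↦ (Jᵏ⁺¹)⁻¹ (t Jᵏ Δyᵏ - F(yᵏ + t Δyᵏ))` turns the
κ-condition into `‖Δyᵏ⁺¹‖ ≤ κ ‖Δyᵏ‖`. The steps then decay geometrically, so `(yᵏ)` is Cauchy
with the usual tail bound, and `‖F(yᵏ)‖ = ‖Jᵏ Δyᵏ‖ ≤ B ‖Δyᵏ‖ → 0` forces `F(y*) = 0`.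
-/

open Filter Set Topology

section MeanValue

variable {E F G : Type*} [NormedAddCommGroup E] [NormedSpace ℝ E]
  [NormedAddCommGroup F] [NormedSpace ℝ F] [NormedAddCommGroup G] [NormedSpace ℝ G]

theorem norm_map_sub_image_sub_le_of_fderiv_segment {f : E → F} (hf : Differentiable ℝ f)
    (S : F →L[ℝ] G) (c : F) (x v : E) {C : ℝ}
    (h : ∀ t ∈ Icc (0 : ℝ) 1, ‖S (c - fderiv ℝ f (x + t • v) v)‖ ≤ C) :
    ‖S (c - (f (x + v) - f x))‖ ≤ C := by
  let g : ℝ → G := fun s => S (s • c - f (x + s • v))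
  have hderiv : ∀ t ∈ Icc (0 : ℝ) 1,
      HasDerivWithinAt g (S (c - fderiv ℝ f (x + t • v) v)) (Icc 0 1) t := by
    intro t _
    have hline : HasDerivAt (fun s : ℝ => x + s • v) v t := by
      simpa using ((hasDerivAt_id t).smul_const v).const_add x
    have hinner := ((hasDerivAt_id t).smul_const c).sub
      ((hf _).hasFDerivAt.comp_hasDerivAt t hline)
    have hS := S.hasFDerivAt.comp_hasDerivAt t hinner
    rw [one_smul] at hS
    exact hS.hasDerivWithinAt
  have hdiff : g 1 - g 0 = S (c - (f (x + v) - f x)) := by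
    simp only [g, one_smul, zero_smul, add_zero, zero_sub, ← map_sub]
    congr 1
    abel
  exact hdiff ▸ norm_image_sub_le_of_norm_deriv_le_segment_01' hderiv
    fun t ht => h t (Ico_subset_Icc_self ht)

end MeanValue

section GeometricSteps

variable {X : Type*} [PseudoMetricSpace X] {y : ℕ → X} {κ : ℝ}

theorem dist_succ_le_mul_pow_of_dist_succ_le
    (hstep : ∀ k, dist (y (k + 1)) (y (k + 1 + 1)) ≤ κ * dist (y k) (y (k + 1))) (k n : ℕ) :
    dist (y (k + n)) (y (k + n + 1)) ≤ dist (y k) (y (k + 1)) * κ ^ n := by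
  rcases le_or_gt 0 κ with hκ | hκ
  · induction n with
    | zero => simp
    | succ n ih =>
      calc dist (y (k + (n + 1))) (y (k + (n + 1) + 1))
          ≤ κ * dist (y (k + n)) (y (k + n + 1)) := hstep (k + n)
        _ ≤ κ * (dist (y k) (y (k + 1)) * κ ^ n) := by gcongr
        _ = dist (y k) (y (k + 1)) * κ ^ (n + 1) := by ring
  · -- a negative factor forces every step to vanish
    have hzero : ∀ j, dist (y j) (y (j + 1)) = 0 := fun j =>
      le_antisymm (nonpos_of_mul_nonneg_right (dist_nonneg.trans (hstep j)) hκ) dist_nonneg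
    simp [hzero]

theorem exists_tendsto_dist_le_of_dist_succ_le [CompleteSpace X] (hκ : κ < 1)
    (hstep : ∀ k, dist (y (k + 1)) (y (k + 1 + 1)) ≤ κ * dist (y k) (y (k + 1))) :
    ∃ a, Tendsto y atTop (𝓝 a) ∧ ∀ k, dist (y k) a ≤ dist (y k) (y (k + 1)) / (1 - κ) := by
  have hgeo := dist_succ_le_mul_pow_of_dist_succ_le hstep
  obtain ⟨a, ha⟩ := cauchySeq_tendsto_of_complete <|
    cauchySeq_of_le_geometric κ _ hκ (by simpa using hgeo 0)
  refine ⟨a, ha, fun k => ?_⟩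
  have hshift : Tendsto (fun n => y (k + n)) atTop (𝓝 a) := by
    simpa only [Function.comp_def, add_comm _ k] using ha.comp (tendsto_add_atTop_nat k)
  simpa using dist_le_of_le_geometric_of_tendsto₀ κ _ hκ (hgeo k) hshift

end GeometricSteps

theorem ContinuousAt.eq_zero_of_tendsto_of_norm_le_mul_dist_succ {X E : Type*}
    [PseudoMetricSpace X] [NormedAddCommGroup E] {f : X → E} {y : ℕ → X} {a : X} {B : ℝ}
    (hf : ContinuousAt f a) (hy : Tendsto y atTop (𝓝 a))
    (hbound : ∀ k, ‖f (y k)‖ ≤ B * dist (y k) (y (k + 1))) : f a = 0 := by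
  have hdist : Tendsto (fun k => dist (y k) (y (k + 1))) atTop (𝓝 0) := by
    simpa using hy.dist (hy.comp (tendsto_add_atTop_nat 1))
  have hfy : Tendsto (fun k => f (y k)) atTop (𝓝 0) :=
    squeeze_zero_norm hbound (by simpa using hdist.const_mul B)
  exact tendsto_nhds_unique (hf.tendsto.comp hy) hfy

theorem newton_type_qlinear_convergence_general {d : ℕ}
    (F : EuclideanSpace ℝ (Fin d) → EuclideanSpace ℝ (Fin d))
    (hF : ContDiff ℝ 1 F)
    (J : ℕ → (EuclideanSpace ℝ (Fin d) ≃L[ℝ] EuclideanSpace ℝ (Fin d)))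
    (B : ℝ)
    (hB : ∀ k, ‖((J k : EuclideanSpace ℝ (Fin d) →L[ℝ] EuclideanSpace ℝ (Fin d)))‖ ≤ B)
    (y : ℕ → EuclideanSpace ℝ (Fin d))
    (hrec : ∀ k, y (k + 1) = y k - (J k).symm (F (y k)))
    (Δ : ℕ → EuclideanSpace ℝ (Fin d)) (hΔ : ∀ k, Δ k = y (k + 1) - y k)
    (κ : ℝ) (hκ : κ < 1)
    (hcond : ∀ k, ∀ t ∈ Set.Icc (0 : ℝ) 1,
      ‖(J (k + 1)).symm (J k (Δ k) - fderiv ℝ F (y k + t • Δ k) (Δ k))‖ ≤ κ * ‖Δ k‖) :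
    (∀ k, ‖Δ (k + 1)‖ ≤ κ * ‖Δ k‖) ∧
    ∃ ystar : EuclideanSpace ℝ (Fin d),
      Tendsto y atTop (nhds ystar) ∧
      (∀ k, ‖y k - ystar‖ ≤ ‖Δ k‖ / (1 - κ)) ∧
      F ystar = 0 := by
  have hJΔ : ∀ k, J k (Δ k) = -F (y k) := fun k => by rw [hΔ, hrec]; simp
  have hdist : ∀ k, dist (y k) (y (k + 1)) = ‖Δ k‖ := fun k => by
    rw [dist_comm, dist_eq_norm, hΔ]
  have hstep : ∀ k, ‖Δ (k + 1)‖ ≤ κ * ‖Δ k‖ := fun k => by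
    have hnext : Δ (k + 1) = (J (k + 1)).symm (J k (Δ k) - (F (y k + Δ k) - F (y k))) := by
      have hsucc : y k + Δ k = y (k + 1) := by rw [hΔ]; abel
      rw [hJΔ, hsucc, hΔ (k + 1), hrec (k + 1),
        show -F (y k) - (F (y (k + 1)) - F (y k)) = -F (y (k + 1)) by abel, map_neg]
      abel
    rw [hnext]
    exact norm_map_sub_image_sub_le_of_fderiv_segment (hF.differentiable one_ne_zero)
      (J (k + 1)).symm.toContinuousLinearMap _ _ _ (hcond k)
  obtain ⟨ystar, hy, htail⟩ :=
    exists_tendsto_dist_le_of_dist_succ_le (y := y) hκ (by simpa only [hdist] using hstep)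
  refine ⟨hstep, ystar, hy, fun k => by simpa only [← dist_eq_norm, hdist] using htail k, ?_⟩
  refine hF.continuous.continuousAt.eq_zero_of_tendsto_of_norm_le_mul_dist_succ (B := B) hy
    fun k => ?_
  calc ‖F (y k)‖ = ‖J k (Δ k)‖ := by rw [hJΔ, norm_neg]
    _ ≤ B * ‖Δ k‖ := (J k).toContinuousLinearMap.le_of_opNorm_le (hB k) _
    _ = B * dist (y k) (y (k + 1)) := by rw [hdist]

/-- Newton-type q-linear convergence under the κ-condition.  With bounded
invertible approximations `Jᵏ` of the Jacobian and the κ-condition on the iteration,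
each step contracts by the factor `κ`, the iterates converge q-linearly with rate `κ`
to some `y*` with `‖yᵏ − y*‖ ≤ ‖Δyᵏ‖/(1 − κ)`, and the limit is a zero of `F`. -/
theorem newton_type_qlinear_convergence {d : ℕ}
    (F : EuclideanSpace ℝ (Fin d) → EuclideanSpace ℝ (Fin d))
    (hF : ContDiff ℝ 1 F)
    (J : ℕ → (EuclideanSpace ℝ (Fin d) ≃L[ℝ] EuclideanSpace ℝ (Fin d)))
    (B β : ℝ)
    (hB : ∀ k, ‖((J k : EuclideanSpace ℝ (Fin d) →L[ℝ] EuclideanSpace ℝ (Fin d)))‖ ≤ B)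
    (hβ : ∀ k, ‖(((J k).symm : EuclideanSpace ℝ (Fin d) →L[ℝ] EuclideanSpace ℝ (Fin d)))‖ ≤ β)
    (y : ℕ → EuclideanSpace ℝ (Fin d))
    (hrec : ∀ k, y (k + 1) = y k - (J k).symm (F (y k)))
    (Δ : ℕ → EuclideanSpace ℝ (Fin d)) (hΔ : ∀ k, Δ k = y (k + 1) - y k)
    (κ : ℝ) (hκ : κ < 1)
    (hcond : ∀ k, ∀ t ∈ Set.Icc (0 : ℝ) 1,
      ‖(J (k + 1)).symm (J k (Δ k) - fderiv ℝ F (y k + t • Δ k) (Δ k))‖ ≤ κ * ‖Δ k‖) :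
    (∀ k, ‖Δ (k + 1)‖ ≤ κ * ‖Δ k‖) ∧
    ∃ ystar : EuclideanSpace ℝ (Fin d),
      Tendsto y atTop (nhds ystar) ∧
      (∀ k, ‖y k - ystar‖ ≤ ‖Δ k‖ / (1 - κ)) ∧
      F ystar = 0 :=
  newton_type_qlinear_convergence_general F hF J B hB y hrec Δ hΔ κ hκ hcond
end

section
/- (Dennis–Moré-type superlinear convergence, underlying Theorem 2.) Let F : ℝᵈ → ℝᵈ be continuously differentiable, let y* ∈ ℝᵈ satisfy F(y*) = 0 with DF(y*) invertible, and let (Jᵏ)ₖ be invertible d×d real matrices generating iterates y^{k+1} = y^k − (Jᵏ)⁻¹F(y^k) with steps Δy^k = y^{k+1} − y^k ≠ 0 and y^k ≠ y* for all k. If y^k → y* and the Dennis–Moré condition holds, lim_{k→∞} ‖(Jᵏ − DF(y*)) Δy^k‖/‖Δy^k‖ = 0, then the convergence is q-superlinear: lim_{k→∞} ‖y^{k+1} − y*‖/‖y^k − y*‖ = 0. -/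
open Filter Topology Asymptotics

/-!
Write `eₖ = yₖ - y*` and `Δₖ = yₖ₊₁ - yₖ`. Since `Jₖ Δₖ = -F(yₖ)` and `F(y*) = 0`,
`DF(y*) eₖ₊₁ = (DF(y*) - Jₖ) Δₖ - (F(yₖ) - F(y*) - DF(y*) eₖ)`.
The first term is `o(‖Δₖ‖)` by the Dennis–Moré condition, the second is `o(‖eₖ‖)` by
differentiability, and `‖Δₖ‖ ≤ ‖eₖ₊₁‖ + ‖eₖ‖`. Inverting `DF(y*)` gives
`eₖ₊₁ = o(‖eₖ₊₁‖ + ‖eₖ‖)`, and the `o(‖eₖ₊₁‖)` part can be absorbed into the left-hand side.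
-/

theorem Asymptotics.IsLittleO.of_norm_add_norm {α E G : Type*} [SeminormedAddCommGroup E]
    [SeminormedAddCommGroup G] {l : Filter α} {u : α → E} {v : α → G}
    (h : u =o[l] fun k => ‖u k‖ + ‖v k‖) : u =o[l] v := by
  refine IsLittleO.of_bound fun c hc => ?_
  filter_upwards [h.def (by positivity : 0 < c / (1 + c))] with k hk
  rw [Real.norm_of_nonneg (by positivity), div_mul_eq_mul_div, le_div_iff₀ (by positivity)] at hk
  nlinarith

section QuasiNewton

variable {𝕜 E G : Type*} [NontriviallyNormedField 𝕜] [NormedAddCommGroup E] [NormedSpace 𝕜 E]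
  [NormedAddCommGroup G] [NormedSpace 𝕜 G]

theorem quasiNewton_error_eq {f : E → G} {D J : E ≃L[𝕜] G} {x y y' : E}
    (hfx : f x = 0) (hstep : y' = y - J.symm (f y)) :
    D (y' - x) = (D (y' - y) - J (y' - y)) - (f y - f x - D (y - x)) := by
  have hJ : J (y' - y) = -f y := by simp [hstep]
  have hsplit : y' - x = (y' - y) + (y - x) := by abel
  rw [hsplit, map_add, hJ, hfx]
  abel

theorem isLittleO_sub_of_dennisMore {f : E → G} {D : E ≃L[𝕜] G} {x : E}
    (hf : HasFDerivAt f (D : E →L[𝕜] G) x) (hfx : f x = 0) {J : ℕ → E ≃L[𝕜] G} {y : ℕ → E}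
    (hrec : ∀ k, y (k + 1) = y k - (J k).symm (f (y k))) (hy : Tendsto y atTop (𝓝 x))
    (hDM : (fun k => J k (y (k + 1) - y k) - D (y (k + 1) - y k)) =o[atTop]
      fun k => y (k + 1) - y k) :
    (fun k => y (k + 1) - x) =o[atTop] fun k => y k - x := by
  set s : ℕ → ℝ := fun k => ‖y (k + 1) - x‖ + ‖y k - x‖
  have hstep : (fun k => y (k + 1) - y k) =O[atTop] s := by
    refine IsBigO.of_bound 1 (Eventually.of_forall fun k => ?_)
    rw [one_mul, Real.norm_of_nonneg (by positivity), ← sub_sub_sub_cancel_right _ _ x]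
    exact norm_sub_le _ _
  have herr : (fun k => y k - x) =O[atTop] s := by
    refine IsBigO.of_bound 1 (Eventually.of_forall fun k => ?_)
    rw [one_mul, Real.norm_of_nonneg (by positivity)]
    exact le_add_of_nonneg_left (norm_nonneg _)
  have hrem : (fun k => f (y k) - f x - D (y k - x)) =o[atTop] fun k => y k - x :=
    hf.isLittleO.comp_tendsto hy
  have hD : (fun k => D (y (k + 1) - x)) =o[atTop] s := by
    simp_rw [quasiNewton_error_eq hfx (hrec _)]
    exact (hDM.neg_left.trans_isBigO hstep).congr_left (fun k => neg_sub _ _) |>.sub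
      (hrem.trans_isBigO herr)
  refine IsLittleO.of_norm_add_norm ?_
  simpa using (D.symm.isBigO_comp _ atTop).trans_isLittleO hD

end QuasiNewton

theorem dennis_more_superlinear_general {d : ℕ}
    (F : EuclideanSpace ℝ (Fin d) → EuclideanSpace ℝ (Fin d))
    (hF : ContDiff ℝ 1 F)
    (ystar : EuclideanSpace ℝ (Fin d)) (hFy : F ystar = 0)
    (D : EuclideanSpace ℝ (Fin d) ≃L[ℝ] EuclideanSpace ℝ (Fin d))
    (hD : (D : EuclideanSpace ℝ (Fin d) →L[ℝ] EuclideanSpace ℝ (Fin d)) = fderiv ℝ F ystar)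
    (J : ℕ → (EuclideanSpace ℝ (Fin d) ≃L[ℝ] EuclideanSpace ℝ (Fin d)))
    (y : ℕ → EuclideanSpace ℝ (Fin d))
    (hrec : ∀ k, y (k + 1) = y k - (J k).symm (F (y k)))
    (Δ : ℕ → EuclideanSpace ℝ (Fin d)) (hΔ : ∀ k, Δ k = y (k + 1) - y k)
    (hconv : Tendsto y atTop (nhds ystar))
    (hDM : Tendsto (fun k => ‖J k (Δ k) - fderiv ℝ F ystar (Δ k)‖ / ‖Δ k‖) atTop (nhds 0)) :
    Tendsto (fun k => ‖y (k + 1) - ystar‖ / ‖y k - ystar‖) atTop (nhds 0) := by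
  have hderiv : HasFDerivAt F (D : EuclideanSpace ℝ (Fin d) →L[ℝ] EuclideanSpace ℝ (Fin d))
      ystar := hD ▸ (hF.differentiable one_ne_zero ystar).hasFDerivAt
  obtain rfl : Δ = fun k => y (k + 1) - y k := funext hΔ
  have hDM' : (fun k => J k (y (k + 1) - y k) - D (y (k + 1) - y k)) =o[atTop]
      fun k => y (k + 1) - y k := by
    rw [← isLittleO_norm_norm, isLittleO_iff_tendsto fun k hk => by simp_all]
    simpa [← hD] using hDM
  exact (isLittleO_sub_of_dennisMore hderiv hFy hrec hconv hDM').norm_norm.tendsto_div_nhds_zero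

/-- Dennis–Moré-type characterization of q-superlinear convergence for
Newton-type iterations `y⁺ = y − (Jᵏ)⁻¹F(y)`. -/
theorem dennis_more_superlinear {d : ℕ}
    (F : EuclideanSpace ℝ (Fin d) → EuclideanSpace ℝ (Fin d))
    (hF : ContDiff ℝ 1 F)
    (ystar : EuclideanSpace ℝ (Fin d)) (hFy : F ystar = 0)
    (D : EuclideanSpace ℝ (Fin d) ≃L[ℝ] EuclideanSpace ℝ (Fin d))
    (hD : (D : EuclideanSpace ℝ (Fin d) →L[ℝ] EuclideanSpace ℝ (Fin d)) = fderiv ℝ F ystar)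
    (J : ℕ → (EuclideanSpace ℝ (Fin d) ≃L[ℝ] EuclideanSpace ℝ (Fin d)))
    (y : ℕ → EuclideanSpace ℝ (Fin d))
    (hrec : ∀ k, y (k + 1) = y k - (J k).symm (F (y k)))
    (Δ : ℕ → EuclideanSpace ℝ (Fin d)) (hΔ : ∀ k, Δ k = y (k + 1) - y k)
    (hΔne : ∀ k, Δ k ≠ 0) (hyne : ∀ k, y k ≠ ystar)
    (hconv : Tendsto y atTop (nhds ystar))
    (hDM : Tendsto (fun k => ‖J k (Δ k) - fderiv ℝ F ystar (Δ k)‖ / ‖Δ k‖) atTop (nhds 0)) :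
    Tendsto (fun k => ‖y (k + 1) - ystar‖ / ‖y k - ystar‖) atTop (nhds 0) :=
  dennis_more_superlinear_general F hF ystar hFy D hD J y hrec Δ hΔ hconv hDM
end

section
/- (Rank-one update of the condensed Jacobian for lifted collocation.) Let C be an invertible real q×q matrix, D a real q×n matrix, and set E = C⁻¹D. Let ρ, τ_C ∈ ℝ^q, τ_D ∈ ℝⁿ, and α ∈ ℝ satisfy 1 + α τ_Cᵀ C⁻¹ ρ ≠ 0; set β = 1/(1 + α τ_Cᵀ C⁻¹ ρ) and ρ̃ = C⁻¹ρ. Define the updated matrices C⁺ = C + α ρ τ_Cᵀ and D⁺ = D + α ρ τ_Dᵀ. Then: (i) C⁺ is invertible with (C⁺)⁻¹ = C⁻¹ − α β ρ̃ τ_Cᵀ C⁻¹ (Sherman–Morrison), and (ii) the condensed product obeys the rank-one update (C⁺)⁻¹ D⁺ = E + α ρ̃ τ̃ᵀ, where τ̃ᵀ = τ_Dᵀ − β τ_Cᵀ (E + α ρ̃ τ_Dᵀ). -/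
/-!
Both updates add a dyad with the same left factor `u = α ρ`: `C⁺ = C + u τ_Cᵀ` and
`D⁺ = D + u τ_Dᵀ`. Sherman–Morrison inverts `C⁺`, and since `C⁻¹ u = α ρ̃` every term of
`(C⁺)⁻¹ D⁺` other than `E` is again a dyad with left factor `ρ̃`, which collects into `α ρ̃ τ̃ᵀ`.
-/

open scoped Matrix

namespace Matrix

variable {K : Type*} [Field K] {m n : Type*} [Fintype m] [DecidableEq m]

theorem add_vecMulVec_mul_eq_one {A : Matrix m m K} (hA : IsUnit A) {u v : m → K}
    (h : 1 + v ⬝ᵥ (A⁻¹ *ᵥ u) ≠ 0) :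
    (A + vecMulVec u v) *
      (A⁻¹ - (1 + v ⬝ᵥ (A⁻¹ *ᵥ u))⁻¹ • vecMulVec (A⁻¹ *ᵥ u) (v ᵥ* A⁻¹)) = 1 := by
  have hAA : A * A⁻¹ = 1 := mul_nonsing_inv A ((isUnit_iff_isUnit_det A).mp hA)
  rw [add_mul, mul_sub, mul_sub, Matrix.mul_smul, Matrix.mul_smul, hAA, mul_vecMulVec,
    mulVec_mulVec, hAA, one_mulVec, vecMulVec_mul, vecMulVec_mul_vecMulVec, vecMulVec_smul]
  match_scalars <;> field_simp
  ring

theorem isUnit_add_vecMulVec {A : Matrix m m K} (hA : IsUnit A) {u v : m → K}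
    (h : 1 + v ⬝ᵥ (A⁻¹ *ᵥ u) ≠ 0) : IsUnit (A + vecMulVec u v) :=
  (isUnit_iff_isUnit_det _).mpr (isUnit_det_of_right_inverse (add_vecMulVec_mul_eq_one hA h))

theorem inv_add_vecMulVec {A : Matrix m m K} (hA : IsUnit A) {u v : m → K}
    (h : 1 + v ⬝ᵥ (A⁻¹ *ᵥ u) ≠ 0) :
    (A + vecMulVec u v)⁻¹ =
      A⁻¹ - (1 + v ⬝ᵥ (A⁻¹ *ᵥ u))⁻¹ • vecMulVec (A⁻¹ *ᵥ u) (v ᵥ* A⁻¹) :=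
  inv_eq_right_inv (add_vecMulVec_mul_eq_one hA h)

theorem inv_add_vecMulVec_mul_add_vecMulVec {A : Matrix m m K} (hA : IsUnit A) {u v : m → K}
    (h : 1 + v ⬝ᵥ (A⁻¹ *ᵥ u) ≠ 0) (D : Matrix m n K) (w : n → K) :
    (A + vecMulVec u v)⁻¹ * (D + vecMulVec u w) = A⁻¹ * D + vecMulVec (A⁻¹ *ᵥ u)
      (w - (1 + v ⬝ᵥ (A⁻¹ *ᵥ u))⁻¹ • (v ᵥ* (A⁻¹ * D + vecMulVec (A⁻¹ *ᵥ u) w))) := by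
  rw [inv_add_vecMulVec hA h, Matrix.sub_mul, Matrix.mul_add, Matrix.mul_add,
    Matrix.smul_mul, Matrix.smul_mul, mul_vecMulVec, vecMulVec_mul, vecMulVec_mul_vecMulVec,
    vecMul_vecMul, vecMul_add, vecMul_vecMulVec, ← dotProduct_mulVec, vecMulVec_sub,
    vecMulVec_smul, vecMulVec_smul, vecMulVec_add, vecMulVec_smul]
  module

end Matrix

/-- Sherman–Morrison inverse update and the induced rank-one update of the
condensed Jacobian `E = C⁻¹D` for the block-TR1 update of `[D C]` in lifted collocation. -/
theorem lifted_collocation_rank_one_update {q n : ℕ}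
    (C : Matrix (Fin q) (Fin q) ℝ) (hC : IsUnit C)
    (D : Matrix (Fin q) (Fin n) ℝ)
    (E : Matrix (Fin q) (Fin n) ℝ) (hE : E = C⁻¹ * D)
    (ρ τC : Fin q → ℝ) (τD : Fin n → ℝ) (α : ℝ)
    (hden : 1 + α * (τC ⬝ᵥ (C⁻¹ *ᵥ ρ)) ≠ 0)
    (β : ℝ) (hβ : β = 1 / (1 + α * (τC ⬝ᵥ (C⁻¹ *ᵥ ρ))))
    (ρt : Fin q → ℝ) (hρt : ρt = C⁻¹ *ᵥ ρ)
    (Cp : Matrix (Fin q) (Fin q) ℝ) (hCp : Cp = C + α • Matrix.vecMulVec ρ τC)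
    (Dp : Matrix (Fin q) (Fin n) ℝ) (hDp : Dp = D + α • Matrix.vecMulVec ρ τD)
    (τt : Fin n → ℝ)
    (hτt : τt = τD - β • (τC ᵥ* (E + α • Matrix.vecMulVec ρt τD))) :
    IsUnit Cp ∧
    Cp⁻¹ = C⁻¹ - (α * β) • Matrix.vecMulVec ρt (τC ᵥ* C⁻¹) ∧
    Cp⁻¹ * Dp = E + α • Matrix.vecMulVec ρt τt := by
  rw [← Matrix.smul_vecMulVec] at hCp hDp
  have hρ : C⁻¹ *ᵥ (α • ρ) = α • ρt := by rw [Matrix.mulVec_smul, hρt]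
  have hscale : 1 + τC ⬝ᵥ (C⁻¹ *ᵥ (α • ρ)) = 1 + α * (τC ⬝ᵥ (C⁻¹ *ᵥ ρ)) := by
    rw [Matrix.mulVec_smul, dotProduct_smul, smul_eq_mul]
  have hden' := hscale ▸ hden
  have hβ' : (1 + τC ⬝ᵥ (C⁻¹ *ᵥ (α • ρ)))⁻¹ = β := by rw [hscale, hβ, one_div]
  refine ⟨hCp ▸ Matrix.isUnit_add_vecMulVec hC hden', ?_, ?_⟩
  · rw [hCp, Matrix.inv_add_vecMulVec hC hden', hβ', hρ, Matrix.smul_vecMulVec, smul_smul,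
      mul_comm]
  · rw [hCp, hDp, Matrix.inv_add_vecMulVec_mul_add_vecMulVec hC hden', hβ', hρ, ← hE,
      Matrix.smul_vecMulVec, Matrix.smul_vecMulVec, ← hτt]
end
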